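/- arXiv:1606.02703 — 5 statements merged into one kernel-verified Lean document; each statement's English description precedes it below -/
import Mathlib

section
/- Let d ≥ 4, let σ be a d-cycle in S_d, and let i ∈ {1,…,⌊d/4⌋} with d' = ⌊d/4⌋. Then β_i(σ) equals σ multiplied on the right by the product of the two disjoint transpositions (σ^{2i-2}(1) σ^{2d'+2i-2}(1)) and (σ^{2i-1}(1) σ^{2d'+2i-1}(1)). -/
/-- The index involution `β_i` on `{1,…,d}` (as a function on `ℕ`), swapping
`2i-1` with `2⌊d/4⌋+2i-1` and fixing everything else. -/
def beta (d i : ℕ) (j : ℕ) : ℕ :=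
  if j = 2*i - 1 then 2*(d/4) + 2*i - 1
  else if j = 2*(d/4) + 2*i - 1 then 2*i - 1
  else j

/-- If `σ` is a `d`-cycle (`d ≥ 4`), `1 ≤ i ≤ ⌊d/4⌋ = d'`, and `τ = β_i(σ)` is defined by
`β_i(σ)^j(p) = σ^{β_i(j)}(p)` for `j = 1,…,d`, then `β_i(σ)` equals `σ` multiplied on the
right by the product of the two disjoint transpositions
`(σ^{2i-2}(p) σ^{2d'+2i-2}(p))` and `(σ^{2i-1}(p) σ^{2d'+2i-1}(p))`. -/
theorem stmt_3 (d : ℕ) (hd : 4 ≤ d) (i : ℕ) (hi1 : 1 ≤ i) (hi2 : i ≤ d / 4)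
    (σ : Equiv.Perm (Fin d)) (hcyc : σ.IsCycle) (hsupp : σ.support = Finset.univ)
    (p : Fin d) (τ : Equiv.Perm (Fin d))
    (hτ : ∀ j ∈ Finset.Icc 1 d, (τ ^ j) p = (σ ^ (beta d i j)) p) :
    τ = σ * Equiv.swap ((σ ^ (2*i - 2)) p) ((σ ^ (2*(d/4) + 2*i - 2)) p)
          * Equiv.swap ((σ ^ (2*i - 1)) p) ((σ ^ (2*(d/4) + 2*i - 1)) p) := by
  have hdvd : d/4*4 ≤ d := Nat.div_mul_le_self d 4
  have hco : σ.IsCycleOn ((Finset.univ : Finset (Fin d)) : Set (Fin d)) := by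
    have h := hcyc.isCycleOn
    have he : {x : Fin d | σ x ≠ x} = ((Finset.univ : Finset (Fin d)) : Set (Fin d)) := by
      ext x
      simp [← Equiv.Perm.mem_support, hsupp]
    rwa [he] at h
  have hkey : ∀ m n : ℕ, (σ^m) p = (σ^n) p ↔ m % d = n % d := by
    intro m n
    have h := hco.pow_apply_eq_pow_apply (Finset.mem_univ p) (m := m) (n := n)
    rw [Finset.card_univ, Fintype.card_fin] at h
    exact h
  have hne : ∀ m n : ℕ, m < d → n < d → m ≠ n → (σ^m) p ≠ (σ^n) p := by
    intro m n hm hn h hc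
    rw [hkey, Nat.mod_eq_of_lt hm, Nat.mod_eq_of_lt hn] at hc
    exact h hc
  have hsur : ∀ x : Fin d, ∃ m, m < d ∧ (σ^m) p = x := by
    intro x
    have hp : σ p ≠ p := by
      have h := Finset.mem_univ p
      rw [← hsupp, Equiv.Perm.mem_support] at h; exact h
    have hx : σ x ≠ x := by
      have h := Finset.mem_univ x
      rw [← hsupp, Equiv.Perm.mem_support] at h; exact h
    obtain ⟨n, hn⟩ := hcyc.exists_pow_eq hp hx
    refine ⟨n % d, Nat.mod_lt _ (by omega), ?_⟩
    rw [← hn, hkey]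
    simp [Nat.mod_mod_of_dvd]
  have hτ1 : τ p = (σ ^ beta d i 1) p := by
    have h := hτ 1 (Finset.mem_Icc.mpr ⟨le_refl 1, by omega⟩)
    simpa using h
  have hstep : ∀ j, 1 ≤ j → j ≤ d - 1 →
      τ ((σ ^ beta d i j) p) = (σ ^ beta d i (j+1)) p := by
    intro j h1 h2
    have A := hτ j (Finset.mem_Icc.mpr ⟨h1, by omega⟩)
    have B := hτ (j+1) (Finset.mem_Icc.mpr ⟨by omega, by omega⟩)
    rw [pow_succ', Equiv.Perm.mul_apply, A] at B
    exact B
  have hbne : ∀ j, j ≠ 2*i-1 → j ≠ 2*(d/4)+2*i-1 → beta d i j = j := by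
    intro j h1 h2
    unfold beta
    rw [if_neg h1, if_neg h2]
  have hbA : beta d i (2*i-1) = 2*(d/4)+2*i-1 := by
    unfold beta; rw [if_pos rfl]
  have hbB : beta d i (2*(d/4)+2*i-1) = 2*i-1 := by
    unfold beta; rw [if_neg (by omega), if_pos rfl]
  ext x
  obtain ⟨m, hm, rfl⟩ := hsur x
  simp only [Equiv.Perm.mul_apply]
  by_cases h1 : m = 2*i-2
  · -- m = a-1 : both sides give σ^b p
    subst h1
    have hL : τ ((σ^(2*i-2)) p) = (σ^(2*(d/4)+2*i-1)) p := by
      by_cases hi' : i = 1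
      · subst hi'
        have h0 : (2*1-2 : ℕ) = 0 := rfl
        rw [h0, pow_zero, Equiv.Perm.one_apply, hτ1]
        have hb1 : beta d 1 1 = 2*(d/4)+2*1-1 := by
          unfold beta; rw [if_pos (by omega)]
        rw [hb1]
      · have hj := hstep (2*i-2) (by omega) (by omega)
        rw [hbne (2*i-2) (by omega) (by omega)] at hj
        have he : 2*i-2+1 = 2*i-1 := by omega
        rw [he, hbA] at hj
        exact hj
    rw [hL,
      Equiv.swap_apply_of_ne_of_ne
        (hne _ _ (by omega) (by omega) (by omega))
        (hne _ _ (by omega) (by omega) (by omega)),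
      Equiv.swap_apply_left, ← Equiv.Perm.mul_apply, ← pow_succ',
      show 2*(d/4)+2*i-2+1 = 2*(d/4)+2*i-1 from by omega]
  · by_cases h2 : m = 2*i-1
    · -- m = a : both sides give σ^{b+1} p
      subst h2
      have hj := hstep (2*(d/4)+2*i-1) (by omega) (by omega)
      rw [hbB, hbne (2*(d/4)+2*i-1+1) (by omega) (by omega)] at hj
      rw [hj, Equiv.swap_apply_left,
        Equiv.swap_apply_of_ne_of_ne
          (hne _ _ (by omega) (by omega) (by omega))
          (hne _ _ (by omega) (by omega) (by omega)),
        ← Equiv.Perm.mul_apply, ← pow_succ']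
    · by_cases h3 : m = 2*(d/4)+2*i-2
      · -- m = b-1 : both sides give σ^a p
        subst h3
        have hj := hstep (2*(d/4)+2*i-2) (by omega) (by omega)
        rw [hbne (2*(d/4)+2*i-2) (by omega) (by omega)] at hj
        have he : 2*(d/4)+2*i-2+1 = 2*(d/4)+2*i-1 := by omega
        rw [he, hbB] at hj
        rw [hj,
          Equiv.swap_apply_of_ne_of_ne
            (hne _ _ (by omega) (by omega) (by omega))
            (hne _ _ (by omega) (by omega) (by omega)),
          Equiv.swap_apply_right, ← Equiv.Perm.mul_apply, ← pow_succ',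
          show 2*i-2+1 = 2*i-1 from by omega]
      · by_cases h4 : m = 2*(d/4)+2*i-1
        · -- m = b : both sides give σ^{a+1} p
          subst h4
          have hj := hstep (2*i-1) (by omega) (by omega)
          rw [hbA, hbne (2*i-1+1) (by omega) (by omega)] at hj
          rw [hj, Equiv.swap_apply_right,
            Equiv.swap_apply_of_ne_of_ne
              (hne _ _ (by omega) (by omega) (by omega))
              (hne _ _ (by omega) (by omega) (by omega)),
            ← Equiv.Perm.mul_apply, ← pow_succ']
        · -- generic m : both sides give σ^{m+1} p
          have hL : τ ((σ^m) p) = (σ^(m+1)) p := by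
            by_cases hm0 : m = 0
            · subst hm0
              rw [pow_zero, Equiv.Perm.one_apply, hτ1,
                hbne 1 (by omega) (by omega), pow_one]
            · have hj := hstep m (by omega) (by omega)
              rw [hbne m (by omega) (by omega),
                hbne (m+1) (by omega) (by omega)] at hj
              exact hj
          rw [hL,
            Equiv.swap_apply_of_ne_of_ne
              (hne _ _ (by omega) (by omega) (by omega))
              (hne _ _ (by omega) (by omega) (by omega)),
            Equiv.swap_apply_of_ne_of_ne
              (hne _ _ (by omega) (by omega) (by omega))
              (hne _ _ (by omega) (by omega) (by omega)),
            ← Equiv.Perm.mul_apply, ← pow_succ']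
end

section
/- Let d ≥ 4, σ a d-cycle in S_d, A ⊆ {1,…,⌊d/4⌋}, and define H_i = {2i-2, 2i-1, 2d'+2i-2, 2d'+2i-1} (with d' = ⌊d/4⌋) and H_A = ⋃_{i∈A} H_i. Then for every x ∈ {1,…,d}, β_A(σ)(x) = σ(x) unless x = σ^j(1) for some j ∈ H_A. -/
open Classical in
/-- For `A ⊆ {1,…,⌊d/4⌋}`, the composition `β_A` of the commuting involutions
`β_i` (`i ∈ A`), each swapping `2i-1` with `2⌊d/4⌋+2i-1`. -/
noncomputable def betaA (d : ℕ) (A : Finset ℕ) (j : ℕ) : ℕ :=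
  if ∃ i ∈ A, j = 2*i - 1 then j + 2*(d/4)
  else if ∃ i ∈ A, j = 2*(d/4) + 2*i - 1 then j - 2*(d/4)
  else j

/-- `H_A = ⋃_{i ∈ A} {2i-2, 2i-1, 2d'+2i-2, 2d'+2i-1}` with `d' = ⌊d/4⌋`. -/
def HA (d : ℕ) (A : Finset ℕ) : Finset ℕ :=
  A.biUnion fun i => {2*i - 2, 2*i - 1, 2*(d/4) + 2*i - 2, 2*(d/4) + 2*i - 1}

/-- Let `d ≥ 4`, `σ` a `d`-cycle, `A ⊆ {1,…,⌊d/4⌋}`, and let `τ = β_A(σ)` be defined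
by `β_A(σ)^j(p) = σ^{β_A(j)}(p)` for `j = 1,…,d` (with base point `p` playing the role
of `1`). Then for every `x`, `β_A(σ)(x) = σ(x)` unless `x = σ^j(p)` for some `j ∈ H_A`. -/
theorem stmt_5 (d : ℕ) (hd : 4 ≤ d) (A : Finset ℕ) (hA : A ⊆ Finset.Icc 1 (d / 4))
    (σ : Equiv.Perm (Fin d)) (hcyc : σ.IsCycle) (hsupp : σ.support = Finset.univ)
    (p : Fin d) (τ : Equiv.Perm (Fin d))
    (hτ : ∀ j ∈ Finset.Icc 1 d, (τ ^ j) p = (σ ^ (betaA d A j)) p) :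
    ∀ x : Fin d, (∀ j ∈ HA d A, x ≠ (σ ^ j) p) → τ x = σ x := by
  intro x hx
  have hd0 : 0 < d := by omega
  have hord : orderOf σ = d := by
    rw [hcyc.orderOf, hsupp, Finset.card_univ, Fintype.card_fin]
  have hp : σ p ≠ p :=
    Equiv.Perm.mem_support.mp (by rw [hsupp]; exact Finset.mem_univ p)
  have hxne : σ x ≠ x :=
    Equiv.Perm.mem_support.mp (by rw [hsupp]; exact Finset.mem_univ x)
  obtain ⟨i, hi⟩ := hcyc.exists_pow_eq hp hxne
  set k := i % d with hk
  have hklt : k < d := Nat.mod_lt _ hd0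
  have hkx : (σ ^ k) p = x := by
    have he : σ ^ k = σ ^ i := by
      have h := pow_mod_orderOf (x := σ) (n := i)
      rwa [hord] at h
    rw [he, hi]
  have hkH : k ∉ HA d A := fun h => hx k h hkx.symm
  have key : ∀ i ∈ A, k ≠ 2*i-2 ∧ k ≠ 2*i-1 ∧ k ≠ 2*(d/4)+2*i-2 ∧ k ≠ 2*(d/4)+2*i-1 := by
    intro i hiA
    have h4 : k ∉ ({2*i-2, 2*i-1, 2*(d/4)+2*i-2, 2*(d/4)+2*i-1} : Finset ℕ) :=
      fun h => hkH (Finset.mem_biUnion.mpr ⟨i, hiA, h⟩)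
    simp only [Finset.mem_insert, Finset.mem_singleton, not_or] at h4
    exact ⟨h4.1, h4.2.1, h4.2.2.1, h4.2.2.2⟩
  have hb1 : betaA d A (k+1) = k+1 := by
    unfold betaA
    rw [if_neg, if_neg]
    · rintro ⟨i, hiA, hieq⟩
      have hi1 := Finset.mem_Icc.mp (hA hiA)
      have := (key i hiA).2.2.1
      omega
    · rintro ⟨i, hiA, hieq⟩
      have hi1 := Finset.mem_Icc.mp (hA hiA)
      have := (key i hiA).1
      omega
  have hb0 : betaA d A k = k := by
    unfold betaA
    rw [if_neg, if_neg]
    · rintro ⟨i, hiA, hieq⟩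
      exact (key i hiA).2.2.2 hieq
    · rintro ⟨i, hiA, hieq⟩
      exact (key i hiA).2.1 hieq
  have hxk : (τ ^ k) p = x := by
    rcases Nat.eq_zero_or_pos k with h0 | h1
    · rw [h0] at hkx ⊢
      simpa using hkx
    · rw [hτ k (Finset.mem_Icc.mpr ⟨h1, by omega⟩), hb0, hkx]
  have h1 : (τ ^ (k+1)) p = (σ ^ (k+1)) p := by
    rw [hτ (k+1) (Finset.mem_Icc.mpr ⟨by omega, by omega⟩), hb1]
  calc τ x = (τ ^ (k+1)) p := by rw [← hxk, pow_succ', Equiv.Perm.mul_apply]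
    _ = (σ ^ (k+1)) p := h1
    _ = σ x := by rw [← hkx, pow_succ', Equiv.Perm.mul_apply]
end

section
/- Let d ∈ 2ℕ and let T_d ⊂ S_d denote the set of permutations that are products of d/2 disjoint transpositions (fixed-point-free involutions). For A ⊆ {1,…,⌊d/4⌋} define β_A(σ) = σ · ∏_{i∈A, a_{4i-1}<a_{4i-2}} (a_{4i-3} a_{4i-1})(a_{4i-2} a_{4i}), where (a_1 a_2) ≺ ⋯ ≺ (a_{d-1} a_d) is the canonical ordering of the transpositions of σ (transpositions ordered by their smaller element, and a_{2i-1} < a_{2i}). Then β_A(σ) ∈ T_d. -/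
/-!
Write `σ_{p,q} := (p q)(σp σq)`. For a fixed-point-free involution `σ` and `σ p ≠ q` this is an
involution commuting with `σ`, and it never agrees with `σ` at any point. Each factor of the product
defining `β_A(σ)` has this form with `p = a(4i-3)`, `q = a(4i-1)`, and distinct factors move
disjoint quadruples. Hence the product `s` is an involution commuting with `σ`, so `(σ s)² = 1`;
and `s x` is either `x` or `σ_{p,q} x` for a single factor, never `σ x`, so `σ s` has no fixed
point.
-/

theorem List.prod_mul_prod_eq_one_of_pairwise_commute {M : Type*} [Monoid M] {l : List M}
    (hl : l.Pairwise Commute) (h : ∀ g ∈ l, g * g = 1) : l.prod * l.prod = 1 := by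
  induction l with
  | nil => simp
  | cons g l ih =>
    rw [List.pairwise_cons] at hl
    have hg : Commute l.prod g := (Commute.list_prod_right _ _ hl.1).symm
    rw [List.prod_cons, hg.mul_mul_mul_comm, h g (by simp),
      ih hl.2 fun g' hg' => h g' (by simp [hg']), one_mul]

theorem Set.injOn_Icc_of_surjOn {n : ℕ} {a : ℕ → Fin n}
    (h : Set.SurjOn a (Set.Icc 1 n) Set.univ) : Set.InjOn a (Set.Icc 1 n) := by
  simpa using Finset.injOn_of_surjOn_of_card_le a (s := Finset.Icc 1 n) (t := Finset.univ)
    (fun _ _ => Finset.mem_coe.2 (Finset.mem_univ _)) (by simpa using h) (by simp)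

theorem disjoint_quadruples_of_injOn {β : Type*} [DecidableEq β] {a : ℕ → β} {n i j : ℕ}
    (ha : Set.InjOn a (Set.Icc 1 n)) (hi : 1 ≤ i) (hin : 4 * i ≤ n) (hj : 1 ≤ j)
    (hjn : 4 * j ≤ n) (hij : i ≠ j) :
    Disjoint ({a (4*i - 3), a (4*i - 1), a (4*i - 2), a (4*i)} : Finset β)
      {a (4*j - 3), a (4*j - 1), a (4*j - 2), a (4*j)} := by
  simp only [Finset.disjoint_left, Finset.mem_insert, Finset.mem_singleton]
  rintro x (rfl | rfl | rfl | rfl) <;> rintro (h | h | h | h) <;>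
    exact absurd (ha ⟨by omega, by omega⟩ ⟨by omega, by omega⟩ h) (by omega)

namespace Equiv.Perm

theorem apply_quadruple_of_pairing {α : Type*} {σ : Perm α} {a : ℕ → α} {n i : ℕ}
    (hpair : ∀ k, 1 ≤ k → k ≤ n / 2 → σ (a (2*k - 1)) = a (2*k)) (hi : 1 ≤ i) (hin : 4 * i ≤ n) :
    σ (a (4*i - 3)) = a (4*i - 2) ∧ σ (a (4*i - 1)) = a (4*i) := by
  have h₁ := hpair (2*i - 1) (by omega) (by omega)
  have h₂ := hpair (2*i) (by omega) (by omega)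
  rw [show 2 * (2*i - 1) - 1 = 4*i - 3 by omega, show 2 * (2*i - 1) = 4*i - 2 by omega] at h₁
  rw [show 2 * (2*i) - 1 = 4*i - 1 by omega, show 2 * (2*i) = 4*i by omega] at h₂
  exact ⟨h₁, h₂⟩

variable {α : Type*} [DecidableEq α] {σ : Perm α}

-- If `σ p = q` the two transpositions coincide; otherwise they are disjoint.
theorem commute_swap_swap_apply (hσ : Function.Involutive σ) (hfix : ∀ x, σ x ≠ x) (p q : α) :
    Commute (swap p q) (swap (σ p) (σ q)) := by
  have := hσ p; have := hσ q; have := hfix p; have := hfix q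
  have hinj : ∀ x y, σ x = σ y → x = y := fun _ _ => σ.injective.eq_iff.1
  ext x
  simp only [Perm.mul_apply, swap_apply_def]
  grind

theorem commute_swap_mul_swap_apply (hσ : Function.Involutive σ) (hfix : ∀ x, σ x ≠ x)
    (p q : α) : Commute σ (swap p q * swap (σ p) (σ q)) := by
  calc σ * (swap p q * swap (σ p) (σ q))
      = swap (σ p) (σ q) * (σ * swap (σ p) (σ q)) := by
        rw [← mul_assoc, mul_swap_eq_swap_mul σ p q, mul_assoc]
    _ = swap (σ p) (σ q) * swap p q * σ := by
        rw [mul_swap_eq_swap_mul σ (σ p) (σ q), hσ p, hσ q, mul_assoc]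
    _ = swap p q * swap (σ p) (σ q) * σ := by rw [(commute_swap_swap_apply hσ hfix p q).eq]

theorem swap_mul_swap_apply_mul_self (hσ : Function.Involutive σ) (hfix : ∀ x, σ x ≠ x)
    (p q : α) : swap p q * swap (σ p) (σ q) * (swap p q * swap (σ p) (σ q)) = 1 := by
  rw [(commute_swap_swap_apply hσ hfix p q).symm.mul_mul_mul_comm, swap_mul_self, swap_mul_self,
    one_mul]

theorem swap_mul_swap_apply_apply_ne (hσ : Function.Involutive σ) (hfix : ∀ x, σ x ≠ x)
    {p q : α} (hpq : σ p ≠ q) (x : α) : (swap p q * swap (σ p) (σ q)) x ≠ σ x := by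
  have := hσ p; have := hσ q; have := hσ x; have := hfix p; have := hfix q; have := hfix x
  have hinj : ∀ x y, σ x = σ y → x = y := fun _ _ => σ.injective.eq_iff.1
  simp only [Perm.mul_apply, swap_apply_def]
  grind

theorem disjoint_swap_mul_swap {p q r s p' q' r' s' : α}
    (h : _root_.Disjoint ({p, q, r, s} : Finset α) {p', q', r', s'}) :
    Disjoint (swap p q * swap r s) (swap p' q' * swap r' s') := by
  intro x
  simp only [Finset.disjoint_left, Finset.mem_insert, Finset.mem_singleton] at h
  simp only [Perm.mul_apply, swap_apply_def]
  grind

theorem mul_list_prod_apply_ne [Fintype α] (hσ : Function.Involutive σ) (hfix : ∀ x, σ x ≠ x)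
    {l : List (Perm α)} (hl : l.Pairwise Disjoint) (hg : ∀ g ∈ l, ∀ x, g x ≠ σ x) (x : α) :
    (σ * l.prod) x ≠ x := by
  intro hx
  have hprod : l.prod x = σ x := (hσ _).symm.trans (congrArg σ hx)
  by_cases hsupp : x ∈ l.prod.support
  · obtain ⟨g, hgl, hgx⟩ := exists_mem_support_of_mem_support_prod hsupp
    exact hg g hgl x (by rw [eq_on_support_mem_disjoint hgl hl x hgx, hprod])
  · exact hfix x (by rw [← hprod, notMem_support.1 hsupp])

theorem mul_list_prod_swap_mul_swap [Fintype α] (hσ : σ * σ = 1) (hfix : ∀ x, σ x ≠ x)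
    {l : List (Perm α)} (hl : l.Pairwise Disjoint)
    (hg : ∀ g ∈ l, ∃ p q, σ p ≠ q ∧ g = swap p q * swap (σ p) (σ q)) :
    σ * l.prod * (σ * l.prod) = 1 ∧ ∀ x, (σ * l.prod) x ≠ x := by
  have hinv : Function.Involutive σ := fun x => by simpa using congr($hσ x)
  have hcomm : (σ :: l).Pairwise Commute := by
    refine List.pairwise_cons.2 ⟨fun g hgl => ?_, hl.imp Disjoint.commute⟩
    obtain ⟨p, q, -, rfl⟩ := hg g hgl
    exact commute_swap_mul_swap_apply hinv hfix p q
  have hsq : ∀ g ∈ σ :: l, g * g = 1 := by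
    refine List.forall_mem_cons.2 ⟨hσ, fun g hgl => ?_⟩
    obtain ⟨p, q, -, rfl⟩ := hg g hgl
    exact swap_mul_swap_apply_mul_self hinv hfix p q
  refine ⟨by simpa using List.prod_mul_prod_eq_one_of_pairwise_commute hcomm hsq,
    mul_list_prod_apply_ne hinv hfix hl fun g hgl => ?_⟩
  obtain ⟨p, q, hpq, rfl⟩ := hg g hgl
  exact swap_mul_swap_apply_apply_ne hinv hfix hpq

end Equiv.Perm

open Equiv Equiv.Perm in
theorem stmt_7_general (d : ℕ)
    (σ : Equiv.Perm (Fin d)) (hinv : σ * σ = 1) (hfpf : ∀ x, σ x ≠ x)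
    (a : ℕ → Fin d)
    (hpair : ∀ i, 1 ≤ i → i ≤ d / 2 → σ (a (2*i - 1)) = a (2*i) ∧ a (2*i - 1) < a (2*i))
    (hsurj : ∀ x : Fin d, ∃ i, 1 ≤ i ∧ i ≤ d ∧ a i = x)
    (A : Finset ℕ) (hA : A ⊆ Finset.Icc 1 (d / 4))
    (τ : Equiv.Perm (Fin d))
    (hτ : τ = σ * (((A.filter fun i => a (4*i - 1) < a (4*i - 2)).sort (· ≤ ·)).map
        (fun i => Equiv.swap (a (4*i - 3)) (a (4*i - 1))
          * Equiv.swap (a (4*i - 2)) (a (4*i)))).prod) :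
    τ * τ = 1 ∧ ∀ x, τ x ≠ x := by
  have ha : Set.InjOn a (Set.Icc 1 d) := Set.injOn_Icc_of_surjOn fun x _ => by
    obtain ⟨i, hi, hid, hx⟩ := hsurj x
    exact ⟨i, ⟨hi, hid⟩, hx⟩
  set L := (A.filter fun i => a (4*i - 1) < a (4*i - 2)).sort (· ≤ ·)
  have hL : ∀ i ∈ L, (1 ≤ i ∧ 4 * i ≤ d) ∧ a (4*i - 1) < a (4*i - 2) := by
    intro i hi
    rw [Finset.mem_sort, Finset.mem_filter] at hi
    have hiA := Finset.mem_Icc.1 (hA hi.1)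
    exact ⟨⟨hiA.1, by omega⟩, hi.2⟩
  subst hτ
  refine mul_list_prod_swap_mul_swap hinv hfpf ?_ ?_
  · refine List.pairwise_map.2 <| (Finset.sort_nodup _ _).pairwise_of_forall_ne
      fun i hi j hj hij => disjoint_swap_mul_swap ?_
    exact disjoint_quadruples_of_injOn ha (hL i hi).1.1 (hL i hi).1.2 (hL j hj).1.1
      (hL j hj).1.2 hij
  · simp only [List.mem_map]
    rintro _ ⟨i, hi, rfl⟩
    obtain ⟨hσ₁, hσ₂⟩ :=
      apply_quadruple_of_pairing (fun k hk hkd => (hpair k hk hkd).1) (hL i hi).1.1 (hL i hi).1.2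
    refine ⟨a (4*i - 3), a (4*i - 1), hσ₁ ▸ (hL i hi).2.ne', ?_⟩
    rw [hσ₁, hσ₂]

/-- Let `d` be even and let `σ ∈ T_d` be a product of `d/2` disjoint transpositions
(a fixed-point-free involution of `{1,…,d}`, modelled on `Fin d`).  Let
`a 1, a 2, …, a d` list the entries of the canonical ordering
`(a 1 a 2) ≺ ⋯ ≺ (a (d-1) a d)` of the transpositions of `σ` (transpositions ordered
by their smaller element, each written smaller element first).  For
`A ⊆ {1,…,⌊d/4⌋}` define
`β_A(σ) = σ · ∏_{i ∈ A, a(4i-1) < a(4i-2)} (a(4i-3) a(4i-1)) (a(4i-2) a(4i))`.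
Then `β_A(σ) ∈ T_d`, i.e. it is again a fixed-point-free involution. -/
theorem stmt_7 (d : ℕ) (hdeven : d % 2 = 0) (hdpos : 0 < d)
    (σ : Equiv.Perm (Fin d)) (hinv : σ * σ = 1) (hfpf : ∀ x, σ x ≠ x)
    (a : ℕ → Fin d)
    (hpair : ∀ i, 1 ≤ i → i ≤ d / 2 → σ (a (2*i - 1)) = a (2*i) ∧ a (2*i - 1) < a (2*i))
    (hmono : ∀ i j, 1 ≤ i → i < j → j ≤ d / 2 → a (2*i - 1) < a (2*j - 1))
    (hsurj : ∀ x : Fin d, ∃ i, 1 ≤ i ∧ i ≤ d ∧ a i = x)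
    (A : Finset ℕ) (hA : A ⊆ Finset.Icc 1 (d / 4))
    (τ : Equiv.Perm (Fin d))
    (hτ : τ = σ * (((A.filter fun i => a (4*i - 1) < a (4*i - 2)).sort (· ≤ ·)).map
        (fun i => Equiv.swap (a (4*i - 3)) (a (4*i - 1))
          * Equiv.swap (a (4*i - 2)) (a (4*i)))).prod) :
    τ * τ = 1 ∧ ∀ x, τ x ≠ x :=
  stmt_7_general d σ hinv hfpf a hpair hsurj A hA τ hτ
end

section
/- Let d ∈ 2ℕ, σ ∈ T_d a fixed-point-free involution, and A ⊆ {1,…,⌊d/4⌋}. With β_A defined as multiplication of σ on the right by ∏_{i∈A, a_{4i-1}<a_{4i-2}} (a_{4i-3} a_{4i-1})(a_{4i-2} a_{4i}) (in the canonical ordering of the transpositions of σ), we have β_A(β_A(σ)) = σ. -/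
/-!
Let `P` be the product of the block swaps, so `τ = σ * P`. On the indices of the listing `a`,
`σ` acts as the pairing `j ↔ pairMate j` and `P` as the involution `blockSwapIndex S` of the
selected blocks. A direct index computation shows that `τ` pairs the entries of `a ∘ ρ` as `σ`
pairs those of `a`, where `ρ = listingIndex S` exchanges the second and fourth entries of each
selected block; `a ∘ ρ` still satisfies the ordering conditions. Canonical listings of an
involution are unique (their odd entries enumerate `{x | x < τ x}` in increasing order), so
`b = a ∘ ρ`. Reading off `b`, exactly the same blocks are selected and they contribute the same
factors, hence `β_A(τ) = σ * P * P = σ`.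
-/

open Equiv Set

variable {d : ℕ}

def pairMate (j : ℕ) : ℕ := if j % 2 = 1 then j + 1 else j - 1

/-- The index `j` lies in block `(j + 3) / 4 = i`, i.e. `4i-3 ≤ j ≤ 4i`; on each block `i ∈ S` this
is `(4i-3 4i-1)(4i-2 4i)`, the action of `blockProduct a S` on the indices of `a`. -/
def blockSwapIndex (S : Finset ℕ) (j : ℕ) : ℕ :=
  if (j + 3) / 4 ∈ S then (if j % 4 = 1 ∨ j % 4 = 2 then j + 2 else j - 2) else j

/-- Exchanges `4i-2` and `4i` for `i ∈ S`; `a ∘ listingIndex S` is the canonical listing of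
`σ * blockProduct a S`. -/
def listingIndex (S : Finset ℕ) (j : ℕ) : ℕ :=
  if (j + 3) / 4 ∈ S ∧ j % 2 = 0 then (if j % 4 = 2 then j + 2 else j - 2) else j

theorem pairMate_block (j : ℕ) : (pairMate j + 3) / 4 = (j + 3) / 4 := by
  unfold pairMate; split_ifs <;> omega

theorem blockSwapIndex_block (S : Finset ℕ) (j : ℕ) :
    (blockSwapIndex S j + 3) / 4 = (j + 3) / 4 := by
  unfold blockSwapIndex; split_ifs <;> omega

theorem listingIndex_block (S : Finset ℕ) (j : ℕ) :
    (listingIndex S j + 3) / 4 = (j + 3) / 4 := by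
  unfold listingIndex; split_ifs <;> omega

theorem blockSwapIndex_blockSwapIndex (S : Finset ℕ) (j : ℕ) :
    blockSwapIndex S (blockSwapIndex S j) = j := by
  rw [blockSwapIndex.eq_1 S (blockSwapIndex S j), blockSwapIndex_block]
  unfold blockSwapIndex; split_ifs <;> omega

theorem listingIndex_listingIndex (S : Finset ℕ) (j : ℕ) :
    listingIndex S (listingIndex S j) = j := by
  rw [listingIndex.eq_1 S (listingIndex S j), listingIndex_block]
  unfold listingIndex
  by_cases h : (j + 3) / 4 ∈ S
  · simp only [h, true_and]; split_ifs <;> omega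
  · simp [h]

theorem pairMate_blockSwapIndex_listingIndex (S : Finset ℕ) (j : ℕ) :
    pairMate (blockSwapIndex S (listingIndex S j)) = listingIndex S (pairMate j) := by
  rw [blockSwapIndex.eq_1 S (listingIndex S j), listingIndex_block,
    listingIndex.eq_1 S (pairMate j), pairMate_block]
  unfold listingIndex pairMate
  by_cases h : (j + 3) / 4 ∈ S
  · simp only [h, true_and, if_true]; split_ifs <;> omega
  · simp [h]

theorem blockSwapIndex_singleton_blockSwapIndex {S : Finset ℕ} {i : ℕ} (hi : i ∉ S) (j : ℕ) :
    blockSwapIndex {i} (blockSwapIndex S j) = blockSwapIndex (insert i S) j := by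
  rw [blockSwapIndex.eq_1 {i} (blockSwapIndex S j), blockSwapIndex_block]
  unfold blockSwapIndex
  by_cases hj : (j + 3) / 4 = i
  · subst hj; simp [hi]
  · simp only [Finset.mem_singleton, Finset.mem_insert, hj, false_or, if_false]

theorem pairMate_mem_Icc {j : ℕ} (hd : d % 2 = 0) (hj : j ∈ Icc 1 d) : pairMate j ∈ Icc 1 d := by
  obtain ⟨hj1, hjd⟩ := hj
  unfold pairMate; split_ifs <;> exact ⟨by omega, by omega⟩

theorem pairMate_pairMate {j : ℕ} (hj : 1 ≤ j) : pairMate (pairMate j) = j := by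
  unfold pairMate; split_ifs <;> omega

theorem blockSwapIndex_mem_Icc {S : Finset ℕ} (hS : ∀ i ∈ S, i ∈ Icc 1 (d / 4)) {j : ℕ}
    (hj : j ∈ Icc 1 d) : blockSwapIndex S j ∈ Icc 1 d := by
  obtain ⟨hj1, hjd⟩ := hj
  by_cases h : (j + 3) / 4 ∈ S
  · obtain ⟨hi1, hid⟩ := hS _ h
    simp only [blockSwapIndex, h, if_true]; split_ifs <;> exact ⟨by omega, by omega⟩
  · simpa [blockSwapIndex, h] using ⟨hj1, hjd⟩

theorem listingIndex_mem_Icc {S : Finset ℕ} (hS : ∀ i ∈ S, i ∈ Icc 1 (d / 4)) {j : ℕ}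
    (hj : j ∈ Icc 1 d) : listingIndex S j ∈ Icc 1 d := by
  obtain ⟨hj1, hjd⟩ := hj
  by_cases h : (j + 3) / 4 ∈ S
  · obtain ⟨hi1, hid⟩ := hS _ h
    simp only [listingIndex, h, true_and]; split_ifs <;> exact ⟨by omega, by omega⟩
  · simpa [listingIndex, h] using ⟨hj1, hjd⟩

theorem listingIndex_of_odd (S : Finset ℕ) {j : ℕ} (hj : j % 2 = 1) : listingIndex S j = j := by
  simp [listingIndex, show j % 2 ≠ 0 by omega]

theorem listingIndex_four_mul_sub_two {S : Finset ℕ} {i : ℕ} (hi : i ∈ S) (hi1 : 1 ≤ i) :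
    listingIndex S (4*i - 2) = 4*i := by
  rw [listingIndex, if_pos ⟨by rwa [show (4*i - 2 + 3) / 4 = i by omega], by omega⟩,
    if_pos (by omega)]
  omega

theorem listingIndex_four_mul {S : Finset ℕ} {i : ℕ} (hi : i ∈ S) :
    listingIndex S (4*i) = 4*i - 2 := by
  rw [listingIndex, if_pos ⟨by rwa [show (4*i + 3) / 4 = i by omega], by omega⟩, if_neg (by omega)]

theorem listingIndex_of_notMem {S : Finset ℕ} {j : ℕ} (hj : (j + 3) / 4 ∉ S) :
    listingIndex S j = j := by
  simp [listingIndex, hj]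

/-- `a 1, …, a d` are the entries of the canonical ordering `(a 1 a 2) ≺ ⋯ ≺ (a (d-1) a d)` of the
transpositions of `σ`. -/
def IsCanonicalListing (σ : Perm (Fin d)) (a : ℕ → Fin d) : Prop :=
  (∀ i, 1 ≤ i → i ≤ d / 2 → σ (a (2*i - 1)) = a (2*i) ∧ a (2*i - 1) < a (2*i)) ∧
  (∀ i j, 1 ≤ i → i < j → j ≤ d / 2 → a (2*i - 1) < a (2*j - 1)) ∧
  (∀ x : Fin d, ∃ i, 1 ≤ i ∧ i ≤ d ∧ a i = x)

namespace IsCanonicalListing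

variable {σ : Perm (Fin d)} {a : ℕ → Fin d}

theorem injOn (ha : IsCanonicalListing σ a) : InjOn a (Icc 1 d) := by
  have h := Finset.injOn_of_surjOn_of_card_le a (s := Finset.Icc 1 d) (t := Finset.univ)
    (fun _ _ => Finset.mem_coe.2 (Finset.mem_univ _))
    (fun x _ => by obtain ⟨i, hi1, hid, rfl⟩ := ha.2.2 x; exact ⟨i, by simp [hi1, hid], rfl⟩)
    (by simp)
  simpa using h

theorem strictMono_odd (ha : IsCanonicalListing σ a) :
    StrictMono fun k : Fin (d / 2) => a (2 * (k + 1) - 1) :=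
  fun k l hkl => ha.2.1 _ _ (by omega) (by simpa using hkl) (by omega)

theorem range_odd (hd : d % 2 = 0) (hσ : Function.Involutive σ) (ha : IsCanonicalListing σ a) :
    range (fun k : Fin (d / 2) => a (2 * (k + 1) - 1)) = {x | x < σ x} := by
  ext x
  constructor
  · rintro ⟨k, rfl⟩
    obtain ⟨hpair, hlt⟩ := ha.1 (k + 1) (by omega) (by omega)
    simpa [hpair] using hlt
  · intro hx
    obtain ⟨i, hi1, hid, rfl⟩ := ha.2.2 x
    obtain ⟨m, rfl | rfl⟩ : ∃ m, i = 2 * (m + 1) - 1 ∨ i = 2 * (m + 1) := ⟨(i - 1) / 2, by omega⟩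
    · exact ⟨⟨m, by omega⟩, rfl⟩
    · obtain ⟨hpair, hlt⟩ := ha.1 (m + 1) (by omega) (by omega)
      have hback : σ (a (2 * (m + 1))) = a (2 * (m + 1) - 1) := by rw [← hpair, hσ]
      have hlt' : a (2 * (m + 1)) < a (2 * (m + 1) - 1) := by simpa [hback] using hx
      exact absurd hlt hlt'.not_gt

theorem eqOn (hd : d % 2 = 0) (hσ : Function.Involutive σ) {b : ℕ → Fin d}
    (ha : IsCanonicalListing σ a) (hb : IsCanonicalListing σ b) : EqOn a b (Icc 1 d) := by
  have hodd := (ha.strictMono_odd.range_inj hb.strictMono_odd).1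
    ((ha.range_odd hd hσ).trans (hb.range_odd hd hσ).symm)
  have hodd' : ∀ m, 1 ≤ m → m ≤ d / 2 → a (2 * m - 1) = b (2 * m - 1) := fun m hm1 hmd => by
    simpa [Nat.sub_add_cancel hm1] using congrFun hodd ⟨m - 1, by omega⟩
  rintro j ⟨hj1, hjd⟩
  obtain ⟨m, hm1, hmd, rfl | rfl⟩ : ∃ m, 1 ≤ m ∧ m ≤ d / 2 ∧ (j = 2 * m - 1 ∨ j = 2 * m) :=
    ⟨(j + 1) / 2, by omega, by omega, by omega⟩
  · exact hodd' m hm1 hmd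
  · rw [← (ha.1 m hm1 hmd).1, ← (hb.1 m hm1 hmd).1, hodd' m hm1 hmd]

theorem apply_eq_pairMate (hd : d % 2 = 0) (hσ : Function.Involutive σ)
    (ha : IsCanonicalListing σ a) {j : ℕ} (hj : j ∈ Icc 1 d) : σ (a j) = a (pairMate j) := by
  obtain ⟨hj1, hjd⟩ := hj
  obtain ⟨m, hm1, hmd, rfl | rfl⟩ : ∃ m, 1 ≤ m ∧ m ≤ d / 2 ∧ (j = 2 * m - 1 ∨ j = 2 * m) :=
    ⟨(j + 1) / 2, by omega, by omega, by omega⟩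
  · rw [(ha.1 m hm1 hmd).1, pairMate, if_pos (by omega), show 2 * m - 1 + 1 = 2 * m by omega]
  · rw [← (ha.1 m hm1 hmd).1, hσ, pairMate, if_neg (by omega)]

end IsCanonicalListing

theorem Set.InjOn.swap_apply {α β : Type*} [DecidableEq α] [DecidableEq β] {f : α → β}
    {s : Set α} (hf : InjOn f s) {x y z : α} (hx : x ∈ s) (hy : y ∈ s) (hz : z ∈ s) :
    swap (f x) (f y) (f z) = f (swap x y z) := by
  simp only [swap_apply_def, hf.eq_iff hz hx, hf.eq_iff hz hy]
  split_ifs <;> rfl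

def blockSwap (a : ℕ → Fin d) (i : ℕ) : Perm (Fin d) :=
  swap (a (4*i - 3)) (a (4*i - 1)) * swap (a (4*i - 2)) (a (4*i))

def blockProduct (a : ℕ → Fin d) (S : Finset ℕ) : Perm (Fin d) :=
  ((S.sort (· ≤ ·)).map (blockSwap a)).prod

section blockProduct

variable {a : ℕ → Fin d}

theorem blockSwap_apply (ha : InjOn a (Icc 1 d)) {i j : ℕ} (hi : i ∈ Icc 1 (d / 4))
    (hj : j ∈ Icc 1 d) : blockSwap a i (a j) = a (blockSwapIndex {i} j) := by
  obtain ⟨hi1, hid⟩ := hi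
  obtain ⟨hj1, hjd⟩ := hj
  have hmid : swap (4*i - 2) (4*i) j ∈ Icc 1 d := by
    rw [swap_apply_def]; split_ifs <;> exact ⟨by omega, by omega⟩
  rw [blockSwap, Perm.mul_apply, ha.swap_apply ⟨by omega, by omega⟩ ⟨by omega, by omega⟩ ⟨hj1, hjd⟩,
    ha.swap_apply ⟨by omega, by omega⟩ ⟨by omega, by omega⟩ hmid]
  congr 1
  simp only [blockSwapIndex, Finset.mem_singleton, swap_apply_def]
  split_ifs <;> omega

theorem list_prod_map_blockSwap_apply (ha : InjOn a (Icc 1 d)) {l : List ℕ} (hl : l.Nodup)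
    (hrange : ∀ i ∈ l, i ∈ Icc 1 (d / 4)) {j : ℕ} (hj : j ∈ Icc 1 d) :
    (l.map (blockSwap a)).prod (a j) = a (blockSwapIndex l.toFinset j) := by
  induction l with
  | nil => simp [blockSwapIndex]
  | cons i t ih =>
    obtain ⟨hit, htnd⟩ := List.nodup_cons.1 hl
    have ht : ∀ k ∈ t, k ∈ Icc 1 (d / 4) := fun k hk => hrange k (List.mem_cons_of_mem _ hk)
    rw [List.map_cons, List.prod_cons, Perm.mul_apply, ih htnd ht,
      blockSwap_apply ha (hrange i List.mem_cons_self)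
        (blockSwapIndex_mem_Icc (by simpa using ht) hj),
      blockSwapIndex_singleton_blockSwapIndex (by simpa using hit), List.toFinset_cons]

theorem blockProduct_apply (ha : InjOn a (Icc 1 d)) {S : Finset ℕ}
    (hS : ∀ i ∈ S, i ∈ Icc 1 (d / 4)) {j : ℕ} (hj : j ∈ Icc 1 d) :
    blockProduct a S (a j) = a (blockSwapIndex S j) := by
  rw [blockProduct, list_prod_map_blockSwap_apply ha (S.sort_nodup _)
    (fun i hi => hS i ((S.mem_sort _).1 hi)) hj, Finset.sort_toFinset]

theorem IsCanonicalListing.blockProduct_mul_self {σ : Perm (Fin d)} (ha : IsCanonicalListing σ a)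
    {S : Finset ℕ} (hS : ∀ i ∈ S, i ∈ Icc 1 (d / 4)) : blockProduct a S * blockProduct a S = 1 := by
  ext x
  obtain ⟨j, hj1, hjd, rfl⟩ := ha.2.2 x
  have hj : j ∈ Icc 1 d := ⟨hj1, hjd⟩
  rw [Perm.mul_apply, blockProduct_apply ha.injOn hS hj,
    blockProduct_apply ha.injOn hS (blockSwapIndex_mem_Icc hS hj), blockSwapIndex_blockSwapIndex,
    Perm.one_apply]

end blockProduct

theorem involutive_of_apply_eq_pairMate {τ : Perm (Fin d)} {c : ℕ → Fin d} (hd : d % 2 = 0)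
    (hc : ∀ x : Fin d, ∃ i, 1 ≤ i ∧ i ≤ d ∧ c i = x)
    (hτ : ∀ j ∈ Icc 1 d, τ (c j) = c (pairMate j)) : Function.Involutive τ := by
  intro x
  obtain ⟨j, hj1, hjd, rfl⟩ := hc x
  rw [hτ j ⟨hj1, hjd⟩, hτ _ (pairMate_mem_Icc hd ⟨hj1, hjd⟩), pairMate_pairMate hj1]

namespace IsCanonicalListing

variable {σ : Perm (Fin d)} {a : ℕ → Fin d} {S : Finset ℕ}

theorem mul_blockProduct_apply_listingIndex (hd : d % 2 = 0) (hσ : Function.Involutive σ)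
    (ha : IsCanonicalListing σ a) (hS : ∀ i ∈ S, i ∈ Icc 1 (d / 4)) {j : ℕ} (hj : j ∈ Icc 1 d) :
    (σ * blockProduct a S) (a (listingIndex S j)) = a (listingIndex S (pairMate j)) := by
  have hL := listingIndex_mem_Icc hS hj
  rw [Perm.mul_apply, blockProduct_apply ha.injOn hS hL,
    ha.apply_eq_pairMate hd hσ (blockSwapIndex_mem_Icc hS hL),
    pairMate_blockSwapIndex_listingIndex]

theorem lt_listingIndex (ha : IsCanonicalListing σ a) (hS : ∀ i ∈ S, i ∈ Icc 1 (d / 4))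
    (hsel : ∀ i ∈ S, a (4*i - 1) < a (4*i - 2)) {k : ℕ} (hk1 : 1 ≤ k) (hkd : k ≤ d / 2) :
    a (2*k - 1) < a (listingIndex S (2*k)) := by
  unfold listingIndex
  split_ifs with hblock hmod
  · obtain ⟨hi1, hid⟩ := hS _ hblock.1
    calc a (2*k - 1) < a (2*(k + 1) - 1) := ha.2.1 k (k + 1) hk1 (by omega) (by omega)
      _ < a (2*(k + 1)) := (ha.1 (k + 1) (by omega) (by omega)).2
      _ = a (2*k + 2) := rfl
  · have h := hsel _ hblock.1
    rwa [show 4 * ((2*k + 3) / 4) - 1 = 2*k - 1 by omega,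
      show 4 * ((2*k + 3) / 4) - 2 = 2*k - 2 by omega] at h
  · exact (ha.1 k hk1 hkd).2

theorem mul_blockProduct (hd : d % 2 = 0) (hσ : Function.Involutive σ)
    (ha : IsCanonicalListing σ a) (hS : ∀ i ∈ S, i ∈ Icc 1 (d / 4))
    (hsel : ∀ i ∈ S, a (4*i - 1) < a (4*i - 2)) :
    IsCanonicalListing (σ * blockProduct a S) (a ∘ listingIndex S) := by
  refine ⟨fun k hk1 hkd => ⟨?_, ?_⟩, fun i k hi hik hkd => ?_, fun x => ?_⟩
  · rw [Function.comp_apply, mul_blockProduct_apply_listingIndex hd hσ ha hS ⟨by omega, by omega⟩,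
      pairMate, if_pos (by omega), show 2*k - 1 + 1 = 2*k by omega, Function.comp_apply]
  · rw [Function.comp_apply, listingIndex_of_odd S (by omega)]
    exact ha.lt_listingIndex hS hsel hk1 hkd
  · simp only [Function.comp_apply, listingIndex_of_odd S (show (2*i - 1) % 2 = 1 by omega),
      listingIndex_of_odd S (show (2*k - 1) % 2 = 1 by omega)]
    exact ha.2.1 i k hi hik hkd
  · obtain ⟨j, hj1, hjd, rfl⟩ := ha.2.2 x
    obtain ⟨hL1, hLd⟩ := listingIndex_mem_Icc hS ⟨hj1, hjd⟩
    exact ⟨listingIndex S j, hL1, hLd, by rw [Function.comp_apply, listingIndex_listingIndex]⟩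

theorem listingIndex_lt_iff (ha : IsCanonicalListing σ a)
    (hsel : ∀ i ∈ S, a (4*i - 1) < a (4*i - 2)) {i : ℕ} (hi : i ∈ Icc 1 (d / 4)) :
    a (listingIndex S (4*i - 1)) < a (listingIndex S (4*i - 2)) ↔ a (4*i - 1) < a (4*i - 2) := by
  obtain ⟨hi1, hid⟩ := hi
  rw [listingIndex_of_odd S (by omega)]
  by_cases hiS : i ∈ S
  · have hpair := (ha.1 (2*i) (by omega) (by omega)).2
    rw [show 2*(2*i) - 1 = 4*i - 1 by omega, show 2*(2*i) = 4*i by omega] at hpair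
    rw [listingIndex_four_mul_sub_two hiS hi1]
    exact iff_of_true hpair (hsel i hiS)
  · rw [listingIndex_of_notMem (by rwa [show (4*i - 2 + 3) / 4 = i by omega])]

end IsCanonicalListing

theorem blockSwap_comp_listingIndex {a : ℕ → Fin d} {S : Finset ℕ} {i : ℕ} (hi : i ∈ S)
    (hi1 : 1 ≤ i) : blockSwap (a ∘ listingIndex S) i = blockSwap a i := by
  simp only [blockSwap, Function.comp_apply,
    listingIndex_of_odd S (show (4*i - 3) % 2 = 1 by omega),
    listingIndex_of_odd S (show (4*i - 1) % 2 = 1 by omega), listingIndex_four_mul_sub_two hi hi1,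
    listingIndex_four_mul hi, swap_comm (a (4*i))]

theorem blockProduct_eq_of_eqOn {a b : ℕ → Fin d} {S : Finset ℕ}
    (hS : ∀ i ∈ S, i ∈ Icc 1 (d / 4)) (hb : EqOn b (a ∘ listingIndex S) (Icc 1 d)) :
    blockProduct b S = blockProduct a S := by
  unfold blockProduct
  congr 1
  refine List.map_congr_left fun i hi => ?_
  have hiS := (S.mem_sort _).1 hi
  obtain ⟨hi1, hid⟩ := hS i hiS
  have hb' : ∀ k, 1 ≤ k → k ≤ d → b k = (a ∘ listingIndex S) k := fun k h1 h2 => hb ⟨h1, h2⟩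
  rw [← blockSwap_comp_listingIndex (a := a) hiS hi1, blockSwap, blockSwap,
    hb' (4*i - 3) (by omega) (by omega), hb' (4*i - 1) (by omega) (by omega),
    hb' (4*i - 2) (by omega) (by omega), hb' (4*i) (by omega) (by omega)]

theorem stmt_8_general (d : ℕ) (hdeven : d % 2 = 0)
    (σ : Equiv.Perm (Fin d)) (hinv : σ * σ = 1)
    (a : ℕ → Fin d)
    (hapair : ∀ i, 1 ≤ i → i ≤ d / 2 → σ (a (2*i - 1)) = a (2*i) ∧ a (2*i - 1) < a (2*i))
    (hamono : ∀ i j, 1 ≤ i → i < j → j ≤ d / 2 → a (2*i - 1) < a (2*j - 1))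
    (hasurj : ∀ x : Fin d, ∃ i, 1 ≤ i ∧ i ≤ d ∧ a i = x)
    (A : Finset ℕ) (hA : A ⊆ Finset.Icc 1 (d / 4))
    (τ : Equiv.Perm (Fin d))
    (hτ : τ = σ * (((A.filter fun i => a (4*i - 1) < a (4*i - 2)).sort (· ≤ ·)).map
        (fun i => Equiv.swap (a (4*i - 3)) (a (4*i - 1))
          * Equiv.swap (a (4*i - 2)) (a (4*i)))).prod)
    (b : ℕ → Fin d)
    (hbpair : ∀ i, 1 ≤ i → i ≤ d / 2 → τ (b (2*i - 1)) = b (2*i) ∧ b (2*i - 1) < b (2*i))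
    (hbmono : ∀ i j, 1 ≤ i → i < j → j ≤ d / 2 → b (2*i - 1) < b (2*j - 1))
    (hbsurj : ∀ x : Fin d, ∃ i, 1 ≤ i ∧ i ≤ d ∧ b i = x) :
    τ * (((A.filter fun i => b (4*i - 1) < b (4*i - 2)).sort (· ≤ ·)).map
        (fun i => Equiv.swap (b (4*i - 3)) (b (4*i - 1))
          * Equiv.swap (b (4*i - 2)) (b (4*i)))).prod = σ := by
  have hσ : Function.Involutive σ := fun x => by simpa using DFunLike.congr_fun hinv x
  have ha : IsCanonicalListing σ a := ⟨hapair, hamono, hasurj⟩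
  set S := A.filter fun i => a (4*i - 1) < a (4*i - 2)
  have hS : ∀ i ∈ S, i ∈ Icc 1 (d / 4) := fun i hi => by
    simpa using hA (Finset.mem_filter.1 hi).1
  have hsel : ∀ i ∈ S, a (4*i - 1) < a (4*i - 2) := fun i hi => (Finset.mem_filter.1 hi).2
  replace hτ : τ = σ * blockProduct a S := hτ
  have hc : IsCanonicalListing τ (a ∘ listingIndex S) := hτ ▸ ha.mul_blockProduct hdeven hσ hS hsel
  have hτinv : Function.Involutive τ := hτ ▸ involutive_of_apply_eq_pairMate hdeven hc.2.2
    fun j hj => ha.mul_blockProduct_apply_listingIndex hdeven hσ hS hj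
  have hbc : EqOn b (a ∘ listingIndex S) (Icc 1 d) :=
    IsCanonicalListing.eqOn hdeven hτinv ⟨hbpair, hbmono, hbsurj⟩ hc
  have hfilter : A.filter (fun i => b (4*i - 1) < b (4*i - 2)) = S :=
    Finset.filter_congr fun i hi => by
      obtain ⟨hi1, hid⟩ : i ∈ Icc 1 (d / 4) := by simpa using hA hi
      rw [hbc (show 4*i - 1 ∈ Icc 1 d from ⟨by omega, by omega⟩),
        hbc (show 4*i - 2 ∈ Icc 1 d from ⟨by omega, by omega⟩)]
      exact ha.listingIndex_lt_iff hsel ⟨hi1, hid⟩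
  change τ * blockProduct b (A.filter _) = σ
  rw [hfilter, blockProduct_eq_of_eqOn hS hbc, hτ, mul_assoc, ha.blockProduct_mul_self hS, mul_one]

/-- Let `d` be even, `σ ∈ T_d` a fixed-point-free involution of `{1,…,d}` (modelled on
`Fin d`), with `a` listing the entries of the canonical ordering of its transpositions,
and let `A ⊆ {1,…,⌊d/4⌋}`.  Let `τ = β_A(σ)` be `σ` multiplied on the right by
`∏_{i ∈ A, a(4i-1) < a(4i-2)} (a(4i-3) a(4i-1)) (a(4i-2) a(4i))`, and let `b` list the
entries of the canonical ordering of the transpositions of `τ`.  Then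
`β_A(β_A(σ)) = σ`, i.e. `τ` multiplied on the right by
`∏_{i ∈ A, b(4i-1) < b(4i-2)} (b(4i-3) b(4i-1)) (b(4i-2) b(4i))` equals `σ`. -/
theorem stmt_8 (d : ℕ) (hdeven : d % 2 = 0) (hdpos : 0 < d)
    (σ : Equiv.Perm (Fin d)) (hinv : σ * σ = 1) (hfpf : ∀ x, σ x ≠ x)
    (a : ℕ → Fin d)
    (hapair : ∀ i, 1 ≤ i → i ≤ d / 2 → σ (a (2*i - 1)) = a (2*i) ∧ a (2*i - 1) < a (2*i))
    (hamono : ∀ i j, 1 ≤ i → i < j → j ≤ d / 2 → a (2*i - 1) < a (2*j - 1))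
    (hasurj : ∀ x : Fin d, ∃ i, 1 ≤ i ∧ i ≤ d ∧ a i = x)
    (A : Finset ℕ) (hA : A ⊆ Finset.Icc 1 (d / 4))
    (τ : Equiv.Perm (Fin d))
    (hτ : τ = σ * (((A.filter fun i => a (4*i - 1) < a (4*i - 2)).sort (· ≤ ·)).map
        (fun i => Equiv.swap (a (4*i - 3)) (a (4*i - 1))
          * Equiv.swap (a (4*i - 2)) (a (4*i)))).prod)
    (b : ℕ → Fin d)
    (hbpair : ∀ i, 1 ≤ i → i ≤ d / 2 → τ (b (2*i - 1)) = b (2*i) ∧ b (2*i - 1) < b (2*i))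
    (hbmono : ∀ i j, 1 ≤ i → i < j → j ≤ d / 2 → b (2*i - 1) < b (2*j - 1))
    (hbsurj : ∀ x : Fin d, ∃ i, 1 ≤ i ∧ i ≤ d ∧ b i = x) :
    τ * (((A.filter fun i => b (4*i - 1) < b (4*i - 2)).sort (· ≤ ·)).map
        (fun i => Equiv.swap (b (4*i - 3)) (b (4*i - 1))
          * Equiv.swap (b (4*i - 2)) (b (4*i)))).prod = σ :=
  stmt_8_general d hdeven σ hinv a hapair hamono hasurj A hA τ hτ b hbpair hbmono hbsurj
end

section
/- Consider the exclusion process on the complete 4-uniform hypergraph with one edge on vertex set {1,2,3,4}, where at rate 1 a uniformly random 4-cycle is applied. Start two particles at {1,2}, and independently start two independent random walkers u, v at 1 and 2 where each walker moves to a uniform 4-cycle image at rate 1. Let B = {3,4}. Then P(u_t ∈ B, v_t ∈ B) ≤ (1−e^{−t})^2 and P(exclusion configuration at time t equals B) ≥ (1/3) t e^{−t}; consequently for all t < 0.33 the exclusion probability strictly exceeds the independent-walker probability, so negative correlation fails. -/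
open Finset
open scoped Classical

noncomputable section

/-- The six 4-cycles of `S_4` (cycles with full support on `Fin 4`). -/
def FourCycles : Finset (Equiv.Perm (Fin 4)) :=
  Finset.univ.filter fun σ => σ.IsCycle ∧ σ.support = Finset.univ

/-- Generator of the single random walker on the one-edge hypergraph on 4 vertices:
at rate 1 a uniformly random 4-cycle is applied. -/
def Lrw (y x : Fin 4) : ℝ :=
  (1 / 6) * ((FourCycles.filter fun σ => σ y = x).card : ℝ) - (if y = x then 1 else 0)

/-- Generator of the 2-particle exclusion process on the same hypergraph: at rate 1 a
uniformly random 4-cycle is applied to the occupied set. -/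
def LexGen (S' S : Finset (Fin 4)) : ℝ :=
  (1 / 6) * ((FourCycles.filter fun σ => S'.image σ = S).card : ℝ) -
    (if S' = S then 1 else 0)

/-!
Both processes are explicitly solvable. For a single walker, `u t 2 + u t 3` relaxes to `1/2`
at rate `4/3`. For the exclusion process and a pair `S`, the difference `P t S - P t Sᶜ` decays
at rate `4/3` and the sum `P t S + P t Sᶜ` relaxes to `1/3` at rate `1`, which gives
`P t {2,3} = 1/6 + e^{-t}/3 - e^{-4t/3}/2`. With `y = e^{-t/3}` the three claims become
polynomial inequalities in `y ∈ (0, 1]`.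
-/

open Real

def SolvesForward {ι : Type*} [Fintype ι] (L : ι → ι → ℝ) (u : ℝ → ι → ℝ) : Prop :=
  ∀ t x, HasDerivAt (fun s => u s x) (∑ y, u t y * L y x) t

theorem eq_of_hasDerivAt_mul_sub {g : ℝ → ℝ} {b c : ℝ} (h : ∀ t, HasDerivAt g (b * (c - g t)) t)
    (t : ℝ) : g t = c + (g 0 - c) * exp (-(b * t)) := by
  have hconst : ∀ s, HasDerivAt (fun r => (g r - c) * exp (b * r)) 0 s := fun s => by
    refine (((h s).sub_const c).fun_mul ((hasDerivAt_id' s).const_mul b).exp).congr_deriv ?_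
    ring
  have := is_const_of_deriv_eq_zero (fun s => (hconst s).differentiableAt)
    (fun s => (hconst s).deriv) t 0
  simp only [mul_zero, exp_zero, mul_one] at this
  rw [← this, mul_assoc, ← exp_add, add_neg_cancel, exp_zero, mul_one, add_sub_cancel]

namespace SolvesForward

variable {ι : Type*} [Fintype ι] {L : ι → ι → ℝ} {u : ℝ → ι → ℝ}

theorem hasDerivAt_sum (hu : SolvesForward L u) (A : Finset ι) (t : ℝ) :
    HasDerivAt (fun s => ∑ x ∈ A, u s x) (∑ y, u t y * ∑ x ∈ A, L y x) t := by
  refine (HasDerivAt.fun_sum fun x (_ : x ∈ A) => hu t x).congr_deriv ?_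
  simp only [mul_sum]
  exact sum_comm

theorem sum_eq_sum_zero (hu : SolvesForward L u) {A : Finset ι} (hA : ∀ y, ∑ x ∈ A, L y x = 0)
    (t : ℝ) : ∑ x ∈ A, u t x = ∑ x ∈ A, u 0 x := by
  simpa using eq_of_hasDerivAt_mul_sub (b := 0) (c := 0)
    (fun s => by simpa [hA] using hu.hasDerivAt_sum A s) t

end SolvesForward

/-- `open scoped Classical` makes `FourCycles` filter with the classical `Decidable` instance;
unfolding `IsCycle` gives a filter that `decide` can evaluate. -/
theorem fourCycles_eq_filter : FourCycles = univ.filter fun σ : Equiv.Perm (Fin 4) =>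
    (∃ x, σ x ≠ x ∧ ∀ y, σ y ≠ y → σ.SameCycle x y) ∧ σ.support = univ := by
  ext σ
  simp only [FourCycles, mem_filter, mem_univ, true_and]
  rfl

theorem card_fourCycles : #FourCycles = 6 := by
  rw [fourCycles_eq_filter]
  decide

theorem card_filter_fourCycles_apply_eq (y x : Fin 4) :
    #{σ ∈ FourCycles | σ y = x} = if y = x then 0 else 2 := by
  rw [fourCycles_eq_filter]
  revert y x
  decide

theorem card_filter_fourCycles_image_eq {S : Finset (Fin 4)} (hS : #S = 2) (S' : Finset (Fin 4)) :
    #(FourCycles.filter fun σ : Equiv.Perm (Fin 4) => S'.image σ = S) =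
      if S' = S then 0 else if S' = Sᶜ then 2 else if #S' = 2 then 1 else 0 := by
  rw [fourCycles_eq_filter]
  revert S S'
  decide

theorem Lrw_eq (y x : Fin 4) : Lrw y x = if y = x then -1 else 1 / 3 := by
  rw [Lrw, card_filter_fourCycles_apply_eq]
  split_ifs <;> norm_num

theorem sum_Lrw_eq_zero (y : Fin 4) : ∑ x, Lrw y x = 0 := by
  fin_cases y <;> simp [Fin.sum_univ_four, Lrw_eq] <;> norm_num

theorem walker_apply_two_add_apply_three {u : ℝ → Fin 4 → ℝ} (hu : SolvesForward Lrw u)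
    (hmass : ∑ x, u 0 x = 1) (t : ℝ) :
    u t 2 + u t 3 = 1 / 2 + (u 0 2 + u 0 3 - 1 / 2) * exp (-(4 / 3 * t)) := by
  have hmass_t (s : ℝ) : ∑ x, u s x = 1 := (hu.sum_eq_sum_zero sum_Lrw_eq_zero s).trans hmass
  refine eq_of_hasDerivAt_mul_sub (g := fun s => u s 2 + u s 3) (fun s => ?_) t
  refine ((hu s 2).add (hu s 3)).congr_deriv ?_
  have := hmass_t s
  simp only [Fin.sum_univ_four, Lrw_eq, Fin.reduceEq, if_true, if_false] at this ⊢
  linarith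

/-- The filter in `LexGen` runs over `FourCycles` coerced, through the `Finset` monad, to a
finset of functions; the coercion is injective. -/
theorem LexGen_eq (S' S : Finset (Fin 4)) :
    LexGen S' S = 1 / 6 * #(FourCycles.filter fun σ : Equiv.Perm (Fin 4) => S'.image σ = S) -
      if S' = S then 1 else 0 := by
  have hcoe : ((FourCycles >>= fun σ => pure ⇑σ) : Finset (Fin 4 → Fin 4)) =
      FourCycles.image fun σ : Equiv.Perm (Fin 4) => ⇑σ := by
    ext f
    simp only [bind_def, pure_def, mem_sup, mem_singleton, mem_image]
    tauto
  rw [LexGen, hcoe, filter_image, card_image_of_injective _ Equiv.coe_fn_injective]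

theorem sum_LexGen_card_eq_two (S' : Finset (Fin 4)) :
    ∑ S with #S = 2, LexGen S' S = 0 := by
  have hcard (σ : Equiv.Perm (Fin 4)) : #(S'.image σ) = #S' := card_image_of_injective _ σ.injective
  simp only [LexGen_eq, sum_sub_distrib, ← mul_sum, sum_ite_eq, mem_filter, mem_univ, true_and]
  by_cases hS' : #S' = 2
  · rw [← Nat.cast_sum, ← card_eq_sum_card_fiberwise fun σ _ => by simp [hcard, hS'],
      card_fourCycles, if_pos hS']
    norm_num
  · rw [if_neg hS', sum_eq_zero fun S hS => ?_]
    · simp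
    · rw [Nat.cast_eq_zero, card_eq_zero, filter_eq_empty_iff]
      intro σ _ hσ
      exact hS' (by rw [← hcard σ, hσ]; simpa using hS)

theorem LexGen_of_card_eq_two {S : Finset (Fin 4)} (hS : #S = 2) (S' : Finset (Fin 4)) :
    LexGen S' S =
      if S' = S then -1 else if S' = Sᶜ then 1 / 3 else if #S' = 2 then 1 / 6 else 0 := by
  rw [LexGen_eq, card_filter_fourCycles_image_eq hS]
  split_ifs <;> norm_num

theorem LexGen_sub_LexGen_compl {S : Finset (Fin 4)} (hS : #S = 2) (S' : Finset (Fin 4)) :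
    LexGen S' S - LexGen S' Sᶜ =
      4 / 3 * ((if S' = Sᶜ then 1 else 0) - if S' = S then 1 else 0) := by
  have hSc : #Sᶜ = 2 := by rw [card_compl, hS]; rfl
  rw [LexGen_of_card_eq_two hS, LexGen_of_card_eq_two hSc, compl_compl]
  by_cases h : S' = S
  · subst h; simp [ne_compl_self]; norm_num
  by_cases hc : S' = Sᶜ
  · subst hc; simp [compl_ne_self]; norm_num
  simp [h, hc]

theorem LexGen_add_LexGen_compl {S : Finset (Fin 4)} (hS : #S = 2) (S' : Finset (Fin 4)) :
    LexGen S' S + LexGen S' Sᶜ =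
      (if #S' = 2 then 1 / 3 else 0) - ((if S' = S then 1 else 0) + if S' = Sᶜ then 1 else 0) := by
  have hSc : #Sᶜ = 2 := by rw [card_compl, hS]; rfl
  rw [LexGen_of_card_eq_two hS, LexGen_of_card_eq_two hSc, compl_compl]
  by_cases h : S' = S
  · subst h; simp [ne_compl_self, hS]; norm_num
  by_cases hc : S' = Sᶜ
  · subst hc; simp [compl_ne_self, hSc]; norm_num
  by_cases h2 : #S' = 2 <;> simp [h, hc, h2]; norm_num

section Exclusion

variable {P : ℝ → Finset (Fin 4) → ℝ} {S : Finset (Fin 4)}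

theorem exclusion_sub_compl (hP : SolvesForward LexGen P) (hS : #S = 2) (t : ℝ) :
    P t S - P t Sᶜ = (P 0 S - P 0 Sᶜ) * exp (-(4 / 3 * t)) := by
  have := eq_of_hasDerivAt_mul_sub (g := fun s => P s S - P s Sᶜ) (b := 4 / 3) (c := 0)
    (fun s => ?_) t
  · simpa using this
  refine ((hP s S).sub (hP s Sᶜ)).congr_deriv ?_
  simp_rw [← sum_sub_distrib, ← mul_sub, LexGen_sub_LexGen_compl hS]
  simp only [mul_sub, mul_ite, mul_one, mul_zero, sum_sub_distrib, Fintype.sum_ite_eq']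
  ring

theorem exclusion_add_compl (hP : SolvesForward LexGen P) (hmass : ∑ S with #S = 2, P 0 S = 1)
    (hS : #S = 2) (t : ℝ) :
    P t S + P t Sᶜ = 1 / 3 + (P 0 S + P 0 Sᶜ - 1 / 3) * exp (-t) := by
  have hmass_t (s : ℝ) : ∑ S with #S = 2, P s S = 1 :=
    (hP.sum_eq_sum_zero sum_LexGen_card_eq_two s).trans hmass
  have := eq_of_hasDerivAt_mul_sub (g := fun s => P s S + P s Sᶜ) (b := 1) (c := 1 / 3)
    (fun s => ?_) t
  · simpa using this
  refine ((hP s S).add (hP s Sᶜ)).congr_deriv ?_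
  simp_rw [← sum_add_distrib, ← mul_add, LexGen_add_LexGen_compl hS]
  simp only [mul_sub, mul_add, mul_ite, mul_one, mul_zero, sum_sub_distrib, sum_add_distrib,
    Fintype.sum_ite_eq']
  rw [← sum_filter, ← sum_mul, hmass_t s]
  ring

end Exclusion

theorem exp_neg_eq_exp_neg_div_three_pow (t : ℝ) :
    exp (-t) = exp (-(t / 3)) ^ 3 ∧ exp (-(4 / 3 * t)) = exp (-(t / 3)) ^ 4 := by
  constructor <;> rw [← exp_nat_mul] <;> ring_nf

theorem walker_sq_le {t : ℝ} (ht : 0 ≤ t) :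
    (1 / 2 - 1 / 2 * exp (-(4 / 3 * t))) ^ 2 ≤ (1 - exp (-t)) ^ 2 := by
  obtain ⟨h3, h4⟩ := exp_neg_eq_exp_neg_div_three_pow t
  have hy0 : 0 ≤ exp (-(t / 3)) := (exp_pos _).le
  have hy1 : exp (-(t / 3)) ≤ 1 := exp_le_one_iff.2 (by linarith)
  rw [h3, h4]
  set y := exp (-(t / 3))
  have hy4 : y ^ 4 ≤ 1 := pow_le_one₀ hy0 hy1
  refine pow_le_pow_left₀ (by linarith) ?_ 2
  nlinarith [mul_nonneg (sub_nonneg.2 hy1) (mul_nonneg hy0 hy0)]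

theorem exclusion_lower_bound {t : ℝ} (ht : 0 ≤ t) :
    1 / 3 * t * exp (-t) ≤ 1 / 6 + 1 / 3 * exp (-t) - 1 / 2 * exp (-(4 / 3 * t)) := by
  obtain ⟨h3, h4⟩ := exp_neg_eq_exp_neg_div_three_pow t
  have hy0 : 0 ≤ exp (-(t / 3)) := (exp_pos _).le
  have hy1 : exp (-(t / 3)) ≤ 1 := exp_le_one_iff.2 (by linarith)
  have hty : t * exp (-(t / 3)) ≤ 3 * (1 - exp (-(t / 3))) := by
    have hinv : exp (t / 3) * exp (-(t / 3)) = 1 := by rw [← exp_add, add_neg_cancel, exp_zero]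
    nlinarith [add_one_le_exp (t / 3)]
  rw [h3, h4]
  set y := exp (-(t / 3))
  -- the gap below is `(1 - y) ^ 3 * (3 * y + 1) / 6`
  calc 1 / 3 * t * y ^ 3 ≤ (1 - y) * y ^ 2 := by
        nlinarith [mul_le_mul_of_nonneg_right hty (sq_nonneg y)]
    _ ≤ 1 / 6 + 1 / 3 * y ^ 3 - 1 / 2 * y ^ 4 := by
      nlinarith [mul_nonneg (pow_nonneg (sub_nonneg.2 hy1) 3) (by linarith : (0 : ℝ) ≤ 3 * y + 1)]

theorem walker_sq_lt_exclusion {t : ℝ} (ht0 : 0 < t) (ht : t < 0.33) :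
    (1 / 2 - 1 / 2 * exp (-(4 / 3 * t))) ^ 2 <
      1 / 6 + 1 / 3 * exp (-t) - 1 / 2 * exp (-(4 / 3 * t)) := by
  obtain ⟨h3, h4⟩ := exp_neg_eq_exp_neg_div_three_pow t
  have hy_gt : 0.89 < exp (-(t / 3)) := by
    have := add_one_le_exp (-(t / 3))
    norm_num at ht ⊢
    linarith
  have hy_lt : exp (-(t / 3)) < 1 := exp_lt_one_iff.2 (by linarith)
  rw [h3, h4]
  set y := exp (-(t / 3))
  -- twelve times the gap is `4 y^3 - 3 y^8 - 1`, which is `1 - y` times the polynomial below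
  have hF : 0 < 3 * y ^ 7 + 3 * y ^ 6 + 3 * y ^ 5 + 3 * y ^ 4 + 3 * y ^ 3 - y ^ 2 - y - 1 := by
    have hpow (n : ℕ) : (0.89 : ℝ) ^ n ≤ y ^ n := pow_le_pow_left₀ (by norm_num) hy_gt.le n
    nlinarith [hpow 3, hpow 4, hpow 5, hpow 6, hpow 7]
  nlinarith [mul_pos (sub_pos.2 hy_lt) hF]

/-- Failure of negative correlation on the complete 4-uniform one-edge hypergraph on
`V = {1,2,3,4}` (modelled as `Fin 4 = {0,1,2,3}`): let `u, v` be the laws of two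
independent random walkers started at `1, 2` (here `0, 1`) and let `P` be the law of the
2-particle exclusion process started from `{1,2}` (here `{0,1}`); all evolve by applying
a uniformly random 4-cycle at rate 1.  With `B = {3,4}` (here `{2,3}`):
`P(u_t ∈ B, v_t ∈ B) ≤ (1 − e^{−t})²`, `P(exclusion at time t = B) ≥ (1/3)·t·e^{−t}`,
and consequently for all `0 < t < 0.33` the exclusion probability strictly exceeds the
independent-walker probability. -/
theorem stmt_12
    (u v : ℝ → Fin 4 → ℝ) (P : ℝ → Finset (Fin 4) → ℝ)
    (hu0 : ∀ x, u 0 x = if x = 0 then 1 else 0)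
    (hv0 : ∀ x, v 0 x = if x = 1 then 1 else 0)
    (hP0 : ∀ S, P 0 S = if S = ({0, 1} : Finset (Fin 4)) then 1 else 0)
    (hu : ∀ t x, HasDerivAt (fun s => u s x) (∑ y, u t y * Lrw y x) t)
    (hv : ∀ t x, HasDerivAt (fun s => v s x) (∑ y, v t y * Lrw y x) t)
    (hP : ∀ t S, HasDerivAt (fun s => P s S) (∑ S', P t S' * LexGen S' S) t) :
    (∀ t, 0 ≤ t → (u t 2 + u t 3) * (v t 2 + v t 3) ≤ (1 - Real.exp (-t)) ^ 2)
    ∧ (∀ t, 0 ≤ t → (1 / 3) * t * Real.exp (-t) ≤ P t ({2, 3} : Finset (Fin 4)))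
    ∧ (∀ t, 0 < t → t < 0.33 →
        (u t 2 + u t 3) * (v t 2 + v t 3) < P t ({2, 3} : Finset (Fin 4))) := by
  have hu_t (t : ℝ) : u t 2 + u t 3 = 1 / 2 - 1 / 2 * exp (-(4 / 3 * t)) := by
    rw [walker_apply_two_add_apply_three hu (by simp [hu0]), hu0, hu0]
    simp only [Fin.reduceEq, if_false]
    ring
  have hv_t (t : ℝ) : v t 2 + v t 3 = 1 / 2 - 1 / 2 * exp (-(4 / 3 * t)) := by
    rw [walker_apply_two_add_apply_three hv (by simp [hv0]), hv0, hv0]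
    simp only [Fin.reduceEq, if_false]
    ring
  have hP_t (t : ℝ) : P t {2, 3} = 1 / 6 + 1 / 3 * exp (-t) - 1 / 2 * exp (-(4 / 3 * t)) := by
    have hB : #({0, 1} : Finset (Fin 4)) = 2 := rfl
    have hBc : ({0, 1} : Finset (Fin 4))ᶜ = {2, 3} := by decide
    have hmass : ∑ S with #S = 2, P 0 S = 1 := by simp [hP0]
    have hsub := exclusion_sub_compl hP hB t
    have hadd := exclusion_add_compl hP hmass hB t
    have hne : ({2, 3} : Finset (Fin 4)) ≠ {0, 1} := by decide
    simp only [hBc, hP0, if_true, if_neg hne] at hsub hadd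
    linarith
  refine ⟨fun t ht => ?_, fun t ht => ?_, fun t ht0 ht => ?_⟩
  · rw [hu_t, hv_t, ← sq]
    exact walker_sq_le ht
  · rw [hP_t]
    exact exclusion_lower_bound ht
  · rw [hu_t, hv_t, hP_t, ← sq]
    exact walker_sq_lt_exclusion ht0 ht

end
end
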